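/- Let P be a finite graded poset and e ∈ P with rk(e) = i. Then τ_e^* = t_{rk=0} ∘ t_{rk=1} ∘ ⋯ ∘ t_{rk=i−1} ∘ t_e ∘ t_{rk=i−1} ∘ ⋯ ∘ t_{rk=1} ∘ t_{rk=0} and τ_{rk=i}^* = t_{rk=0} ∘ t_{rk=1} ∘ ⋯ ∘ t_{rk=i−1} ∘ t_{rk=i} ∘ t_{rk=i−1} ∘ ⋯ ∘ t_{rk=1} ∘ t_{rk=0}. -/

import Mathlib

/-!
Toggles at incomparable elements commute, so the product of toggles along a linear extension of a
finite set depends only on the set. Listing the elements of rank `< rk e` rank by rank is a linear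
extension of that set, and so is `η_e` followed by the remaining elements; these are incomparable
with `e`, so their toggles commute with `t_e`, and conjugating `t_e` by
`t_{rk=0} ⋯ t_{rk=i-1}` is the same as conjugating it by `η_e`. Each `t_{rk=j}` is an involution,
which turns the inverse of that product into the reversed product. The second identity is the
product of the first over the elements of rank `i`.
-/

open scoped Classical

variable {P : Type*} [PartialOrder P]

abbrev OrderIdealSub (P : Type*) [PartialOrder P] : Type _ := {I : Set P // IsLowerSet I}

abbrev AntichainSub (P : Type*) [PartialOrder P] : Type _ := {A : Set P // IsAntichain (· ≤ ·) A}

noncomputable def togFun (e : P) (I : OrderIdealSub P) : OrderIdealSub P :=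
  if _h : e ∈ I.1 then
    if h2 : IsLowerSet (I.1 \ {e}) then ⟨I.1 \ {e}, h2⟩ else I
  else
    if h2 : IsLowerSet (insert e I.1) then ⟨insert e I.1, h2⟩ else I

noncomputable def atogFun (e : P) (A : AntichainSub P) : AntichainSub P :=
  if _h : e ∈ A.1 then ⟨A.1 \ {e}, A.2.subset Set.diff_subset⟩
  else if h2 : IsAntichain (· ≤ ·) (insert e A.1) then ⟨insert e A.1, h2⟩
  else A

def idealOf (A : AntichainSub P) : OrderIdealSub P :=
  ⟨{x | ∃ y ∈ A.1, x ≤ y}, fun _a _b hba ha => by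
    obtain ⟨y, hy, h⟩ := ha
    exact ⟨y, hy, hba.trans h⟩⟩

def listComp {α : Type*} (fs : List (α → α)) : α → α := fs.foldr (· ∘ ·) id

theorem togFun_involutive (e : P) : Function.Involutive (togFun (P := P) e) := by
  intro I
  unfold togFun
  by_cases h : e ∈ I.1
  · rw [dif_pos h]
    by_cases h2 : IsLowerSet (I.1 \ {e})
    · rw [dif_pos h2]
      have hne : e ∉ (⟨I.1 \ {e}, h2⟩ : OrderIdealSub P).1 := fun hc => hc.2 rfl
      rw [dif_neg hne]
      have hins : insert e (I.1 \ {e}) = I.1 := by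
        rw [Set.insert_diff_singleton, Set.insert_eq_self.mpr h]
      have h3 : IsLowerSet (insert e ((⟨I.1 \ {e}, h2⟩ : OrderIdealSub P)).1) := by
        show IsLowerSet (insert e (I.1 \ {e})); rw [hins]; exact I.2
      rw [dif_pos h3]
      exact Subtype.ext hins
    · rw [dif_neg h2, dif_pos h, dif_neg h2]
  · rw [dif_neg h]
    by_cases h2 : IsLowerSet (insert e I.1)
    · rw [dif_pos h2]
      have hme : e ∈ (⟨insert e I.1, h2⟩ : OrderIdealSub P).1 := Set.mem_insert e I.1
      rw [dif_pos hme]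
      have hdel : (insert e I.1) \ {e} = I.1 := by
        rw [Set.insert_diff_self_of_notMem h]
      have h3 : IsLowerSet ((⟨insert e I.1, h2⟩ : OrderIdealSub P).1 \ {e}) := by
        show IsLowerSet ((insert e I.1) \ {e}); rw [hdel]; exact I.2
      rw [dif_pos h3]
      exact Subtype.ext hdel
    · rw [dif_neg h2, dif_neg h, dif_neg h2]

theorem atogFun_involutive (e : P) : Function.Involutive (atogFun (P := P) e) := by
  intro A
  unfold atogFun
  by_cases h : e ∈ A.1
  · rw [dif_pos h]
    have hne : e ∉ (⟨A.1 \ {e}, A.2.subset Set.diff_subset⟩ : AntichainSub P).1 :=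
      fun hc => hc.2 rfl
    rw [dif_neg hne]
    have hins : insert e (A.1 \ {e}) = A.1 := by
      rw [Set.insert_diff_singleton, Set.insert_eq_self.mpr h]
    have h2 : IsAntichain (· ≤ ·)
        (insert e ((⟨A.1 \ {e}, A.2.subset Set.diff_subset⟩ : AntichainSub P)).1) := by
      show IsAntichain (· ≤ ·) (insert e (A.1 \ {e})); rw [hins]; exact A.2
    rw [dif_pos h2]
    exact Subtype.ext hins
  · rw [dif_neg h]
    by_cases h2 : IsAntichain (· ≤ ·) (insert e A.1)
    · rw [dif_pos h2]
      have hme : e ∈ (⟨insert e A.1, h2⟩ : AntichainSub P).1 := Set.mem_insert e A.1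
      rw [dif_pos hme]
      have hdel : (insert e A.1) \ {e} = A.1 := by
        rw [Set.insert_diff_self_of_notMem h]
      exact Subtype.ext hdel
    · rw [dif_neg h2, dif_neg h, dif_neg h2]

noncomputable def togPerm (e : P) : Equiv.Perm (OrderIdealSub P) :=
  (togFun_involutive e).toPerm _

noncomputable def atogPerm (e : P) : Equiv.Perm (AntichainSub P) :=
  (atogFun_involutive e).toPerm _

def IsLinExtListOn (S : Set P) (l : List P) : Prop :=
  l.Nodup ∧ (∀ x : P, x ∈ l ↔ x ∈ S) ∧
    ∀ i j : Fin l.length, l.get i < l.get j → (i : ℕ) < (j : ℕ)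

noncomputable def RowJ (I : OrderIdealSub P) : OrderIdealSub P :=
  ⟨{x | ∃ m, (m ∉ I.1 ∧ ∀ z, z ∉ I.1 → z ≤ m → z = m) ∧ x ≤ m}, fun _a _b hba ha => by
    obtain ⟨m, hm, h⟩ := ha
    exact ⟨m, hm, hba.trans h⟩⟩

noncomputable def RowA (A : AntichainSub P) : AntichainSub P :=
  ⟨{x | x ∉ (idealOf A).1 ∧ ∀ z, z ∉ (idealOf A).1 → z ≤ x → z = x}, by
    intro a ha b hb hne hab
    exact hne (hb.2 a ha.1 hab)⟩

noncomputable def etaJPerm {P : Type*} [PartialOrder P] (l : List P) :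
    Equiv.Perm (OrderIdealSub P) := (l.map togPerm).prod

def IsToggleable (e : P) (I : Set P) : Prop :=
  (∀ x, x < e → x ∈ I) ∧ ∀ x, e < x → x ∉ I

lemma isLowerSet_diff_singleton_iff {I : Set P} (hI : IsLowerSet I) {e : P} (he : e ∈ I) :
    IsLowerSet (I \ {e}) ↔ IsToggleable e I := by
  constructor
  · intro h
    refine ⟨fun x hx => hI hx.le he, fun x hx hxI => ?_⟩
    exact (h hx.le ⟨hxI, hx.ne'⟩).2 rfl
  · rintro ⟨-, habove⟩ a b hba ⟨ha, hae⟩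
    refine ⟨hI hba ha, fun hbe => ?_⟩
    rw [Set.mem_singleton_iff] at hbe
    subst hbe
    exact habove a (hba.lt_of_ne fun h => hae (Set.mem_singleton_iff.2 h.symm)) ha

lemma isLowerSet_insert_iff {I : Set P} (hI : IsLowerSet I) {e : P} (he : e ∉ I) :
    IsLowerSet (insert e I) ↔ IsToggleable e I := by
  constructor
  · intro h
    refine ⟨fun x hx => ?_, fun x hx hxI => he (hI hx.le hxI)⟩
    exact (h hx.le (Set.mem_insert e I)).resolve_left hx.ne
  · rintro ⟨hbelow, -⟩ a b hba hb
    rcases hb with rfl | hb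
    · rcases hba.eq_or_lt with rfl | hlt
      · exact Set.mem_insert _ _
      · exact Set.mem_insert_of_mem _ (hbelow b hlt)
    · exact Set.mem_insert_of_mem _ (hI hba hb)

lemma togFun_val (e : P) (I : OrderIdealSub P) :
    (togFun e I).1 = if IsToggleable e I.1 then symmDiff I.1 {e} else I.1 := by
  unfold togFun
  by_cases he : e ∈ I.1
  · have hsymm : symmDiff I.1 {e} = I.1 \ {e} := by
      ext x; by_cases hx : x = e <;> simp [Set.mem_symmDiff, hx, he]
    simp only [dif_pos he, isLowerSet_diff_singleton_iff I.2 he, hsymm]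
    split_ifs <;> rfl
  · have hsymm : symmDiff I.1 {e} = insert e I.1 := by
      ext x; by_cases hx : x = e <;> simp [Set.mem_symmDiff, hx, he]
    simp only [dif_neg he, isLowerSet_insert_iff I.2 he, hsymm]
    split_ifs <;> rfl

lemma mem_togFun_of_ne {x e : P} (I : OrderIdealSub P) (hne : x ≠ e) :
    x ∈ (togFun e I).1 ↔ x ∈ I.1 := by
  rw [togFun_val]
  split_ifs <;> simp [Set.mem_symmDiff, hne]

lemma isToggleable_congr {e : P} {I J : Set P} (h : ∀ x, x < e ∨ e < x → (x ∈ I ↔ x ∈ J)) :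
    IsToggleable e I ↔ IsToggleable e J :=
  and_congr (forall_congr' fun x => imp_congr_right fun hx => h x (.inl hx))
    (forall_congr' fun x => imp_congr_right fun hx => not_congr (h x (.inr hx)))

/-- `t_b` moves only `b`, and `IsToggleable a` only looks at elements comparable with `a`. -/
lemma isToggleable_togFun {a b : P} (hab : ¬ a ≤ b) (hba : ¬ b ≤ a) (I : OrderIdealSub P) :
    IsToggleable a (togFun b I).1 ↔ IsToggleable a I.1 :=
  isToggleable_congr fun x hx => mem_togFun_of_ne I fun hxb => by
    subst hxb; exact hx.elim (fun h => hba h.le) (fun h => hab h.le)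

lemma togFun_comm {a b : P} (hab : ¬ a ≤ b) (hba : ¬ b ≤ a) (I : OrderIdealSub P) :
    togFun a (togFun b I) = togFun b (togFun a I) := by
  apply Subtype.ext
  rw [togFun_val a, togFun_val b (togFun a I), isToggleable_togFun hab hba,
    isToggleable_togFun hba hab, togFun_val b I, togFun_val a I]
  split_ifs <;> simp only [symmDiff_right_comm]

lemma togPerm_commute ⦃a b : P⦄ (hab : ¬ a ≤ b) (hba : ¬ b ≤ a) :
    Commute (togPerm a) (togPerm b) :=
  Equiv.ext (togFun_comm hab hba)

section

variable {G : Type*} [Group G]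

lemma prod_map_reverse_of_involutive {ι : Type*} {g : ι → G} (hg : ∀ i, (g i)⁻¹ = g i)
    (l : List ι) : (l.reverse.map g).prod = (l.map g).prod⁻¹ := by
  have hg' : (fun x => x⁻¹) ∘ g = g := funext hg
  rw [List.map_reverse, List.prod_reverse_noncomm, List.map_map, hg']

lemma prod_map_conj {ι : Type*} (a : G) (g : ι → G) (l : List ι) :
    (l.map fun i => a * g i * a⁻¹).prod = a * (l.map g).prod * a⁻¹ := by
  simpa [List.map_map, Function.comp_def, MulAut.conj_apply] using
    (map_list_prod (MulAut.conj a) (l.map g)).symm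

variable {f : P → G}

lemma prod_map_eq_mul_prod_map_erase
    (hf : ∀ ⦃a b⦄, ¬ a ≤ b → ¬ b ≤ a → Commute (f a) (f b))
    {l : List P} (hl : l.Pairwise fun x y => ¬ y < x) {a : P} (ha : a ∈ l)
    (hmin : ∀ b ∈ l, ¬ b < a) :
    (l.map f).prod = f a * ((l.erase a).map f).prod := by
  induction l with
  | nil => cases ha
  | cons b t ih =>
    rcases eq_or_ne b a with rfl | hba
    · rw [List.erase_cons_head, List.map_cons, List.prod_cons]
    have hat : a ∈ t := (List.mem_cons.1 ha).resolve_left hba.symm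
    have hnab : ¬ a < b := List.rel_of_pairwise_cons hl hat
    have hnba : ¬ b < a := hmin b List.mem_cons_self
    have hcomm : Commute (f b) (f a) :=
      hf (fun h => hnba (h.lt_of_ne hba)) (fun h => hnab (h.lt_of_ne hba.symm))
    rw [List.erase_cons_tail (by simpa using hba), List.map_cons, List.map_cons,
      List.prod_cons, List.prod_cons,
      ih hl.of_cons hat fun x hx => hmin x (List.mem_cons_of_mem _ hx),
      ← mul_assoc, ← mul_assoc, hcomm.eq]

theorem prod_map_eq_of_perm_of_pairwise
    (hf : ∀ ⦃a b⦄, ¬ a ≤ b → ¬ b ≤ a → Commute (f a) (f b)) {l l' : List P}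
    (hperm : l.Perm l') (hl : l.Pairwise fun x y => ¬ y < x)
    (hl' : l'.Pairwise fun x y => ¬ y < x) :
    (l.map f).prod = (l'.map f).prod := by
  induction l generalizing l' with
  | nil => rw [List.nil_perm.1 hperm]
  | cons a t ih =>
    have ha : a ∈ l' := hperm.subset List.mem_cons_self
    have hmin : ∀ b ∈ l', ¬ b < a := fun b hb hlt =>
      (List.mem_cons.1 (hperm.symm.subset hb)).elim (fun h => hlt.ne h)
        fun hbt => List.rel_of_pairwise_cons hl hbt hlt
    rw [prod_map_eq_mul_prod_map_erase hf hl' ha hmin, List.map_cons, List.prod_cons,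
      ih (hperm.trans (List.perm_cons_erase ha)).cons_inv hl.of_cons
        (hl'.sublist (List.erase_sublist))]

lemma prod_map_inv_of_antichain
    (hf : ∀ ⦃a b⦄, ¬ a ≤ b → ¬ b ≤ a → Commute (f a) (f b)) (hinv : ∀ x, (f x)⁻¹ = f x)
    {l : List P} (hl : ∀ x ∈ l, ∀ y ∈ l, ¬ x < y) :
    (l.map f).prod⁻¹ = (l.map f).prod := by
  have hpw : ∀ l' : List P, (∀ x ∈ l', ∀ y ∈ l', ¬ x < y) → l'.Pairwise fun x y => ¬ y < x :=
    fun l' h => List.pairwise_of_forall_mem_list fun x hx y hy => h y hy x hx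
  have hinv' : (fun x => x⁻¹) ∘ f = f := funext hinv
  rw [List.prod_inv_reverse, List.map_map, hinv', ← List.map_reverse]
  exact prod_map_eq_of_perm_of_pairwise hf (List.reverse_perm l)
    (hpw _ fun x hx y hy => hl x (List.mem_reverse.1 hx) y (List.mem_reverse.1 hy)) (hpw l hl)

theorem prod_map_conj_eq_of_perm_append
    (hf : ∀ ⦃a b⦄, ¬ a ≤ b → ¬ b ≤ a → Commute (f a) (f b)) {e : P} {l η μ : List P}
    (hperm : l.Perm (η ++ μ)) (hl : l.Pairwise fun x y => ¬ y < x)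
    (hημ : (η ++ μ).Pairwise fun x y => ¬ y < x) (hμ : ∀ x ∈ μ, ¬ x ≤ e ∧ ¬ e ≤ x) :
    (l.map f).prod * f e * (l.map f).prod⁻¹ = (η.map f).prod * f e * (η.map f).prod⁻¹ := by
  have hcomm : Commute (μ.map f).prod (f e) := Commute.list_prod_left _ _ fun g hg => by
    obtain ⟨x, hx, rfl⟩ := List.mem_map.1 hg
    exact hf (hμ x hx).1 (hμ x hx).2
  rw [prod_map_eq_of_perm_of_pairwise hf hperm hl hημ, List.map_append, List.prod_append]
  calc (η.map f).prod * (μ.map f).prod * f e * ((η.map f).prod * (μ.map f).prod)⁻¹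
      = (η.map f).prod * ((μ.map f).prod * f e * (μ.map f).prod⁻¹) * (η.map f).prod⁻¹ := by
        group
    _ = (η.map f).prod * f e * (η.map f).prod⁻¹ := by rw [hcomm.mul_inv_cancel]

end

lemma IsLinExtListOn.pairwise_not_lt {S : Set P} {l : List P} (h : IsLinExtListOn S l) :
    l.Pairwise fun x y => ¬ y < x := by
  rw [List.pairwise_iff_get]
  intro i j hij hlt
  exact absurd (h.2.2 j i hlt) (Nat.lt_asymm hij)

lemma etaJPerm_inv_of_antichain {l : List P} (hl : ∀ x ∈ l, ∀ y ∈ l, ¬ x < y) :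
    (etaJPerm l)⁻¹ = etaJPerm l :=
  prod_map_inv_of_antichain togPerm_commute (fun _ => rfl) hl

theorem etaJPerm_conj_togPerm_eq {e : P} {l η : List P} (hl : l.Nodup)
    (hlpw : l.Pairwise fun x y => ¬ y < x) (hbelow : ∀ x, x < e → x ∈ l)
    (habove : ∀ x ∈ l, ¬ e ≤ x) (hη : IsLinExtListOn {z | z < e} η) :
    etaJPerm l * togPerm e * (etaJPerm l)⁻¹ = etaJPerm η * togPerm e * (etaJPerm η)⁻¹ := by
  have hηpw := hη.pairwise_not_lt
  obtain ⟨hηnd, hηmem, -⟩ := hη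
  set μ := l.filter fun x => !decide (x < e)
  have hμ : ∀ x, x ∈ μ ↔ x ∈ l ∧ ¬ x < e := fun x => by simp [μ]
  have hperm : l.Perm (η ++ μ) := by
    refine (List.filter_append_perm (fun x => decide (x < e)) l).symm.trans
      (List.Perm.append_right _ ?_)
    rw [List.perm_ext_iff_of_nodup (hl.filter _) hηnd]
    intro x
    simpa [hηmem x] using hbelow x
  have hημ : (η ++ μ).Pairwise fun x y => ¬ y < x := by
    refine List.pairwise_append.2 ⟨hηpw, hlpw.sublist List.filter_sublist, ?_⟩
    intro x hx y hy hyx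
    exact ((hμ y).1 hy).2 (hyx.trans ((hηmem x).1 hx))
  refine prod_map_conj_eq_of_perm_append togPerm_commute hperm hlpw hημ fun x hx => ?_
  obtain ⟨hxl, hxe⟩ := (hμ x).1 hx
  exact ⟨fun hle => habove x hxl (hle.eq_or_lt.resolve_right hxe).ge, habove x hxl⟩

def listBelowRank {α : Type*} (L : ℕ → List α) (i : ℕ) : List α := ((List.range i).map L).flatten

section Graded

variable {α : Type*} {rk : α → ℕ} {L : ℕ → List α}

lemma mem_listBelowRank (hL : ∀ j x, x ∈ L j ↔ rk x = j) {i : ℕ} {x : α} :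
    x ∈ listBelowRank L i ↔ rk x < i := by
  simp [listBelowRank, hL]

lemma nodup_listBelowRank (hLnd : ∀ j, (L j).Nodup) (hL : ∀ j x, x ∈ L j ↔ rk x = j) (i : ℕ) :
    (listBelowRank L i).Nodup := by
  refine List.nodup_flatten.2 ⟨by simpa using fun j _ => hLnd j, ?_⟩
  refine List.pairwise_map.2 (List.pairwise_lt_range.imp fun hjk x hxj hxk => ?_)
  rw [hL] at hxj hxk
  omega

lemma pairwise_listBelowRank [Preorder α] (hrk : StrictMono rk) (hL : ∀ j x, x ∈ L j ↔ rk x = j)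
    (i : ℕ) :
    (listBelowRank L i).Pairwise fun x y => ¬ y < x := by
  refine List.pairwise_flatten.2 ⟨?_, ?_⟩
  · simp only [List.mem_map, List.mem_range]
    rintro _ ⟨j, -, rfl⟩
    refine List.pairwise_of_forall_mem_list fun x hx y hy hyx => ?_
    have := hrk hyx
    rw [hL] at hx hy
    omega
  · refine List.pairwise_map.2 (List.pairwise_lt_range.imp fun hjk x hx y hy hyx => ?_)
    have := hrk hyx
    rw [hL] at hx hy
    omega

end Graded

lemma etaJPerm_listBelowRank {L : ℕ → List P} (i : ℕ) :
    etaJPerm (listBelowRank L i) = ((List.range i).map fun j => etaJPerm (L j)).prod := by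
  simp only [etaJPerm, listBelowRank, List.map_flatten, List.prod_flatten, List.map_map]
  rfl

theorem etaJPerm_listBelowRank_conj_togPerm {rk : P → ℕ} {L : ℕ → List P} (hrk : StrictMono rk)
    (hLnd : ∀ j, (L j).Nodup) (hL : ∀ j x, x ∈ L j ↔ rk x = j) {e : P} {η : List P}
    (hη : IsLinExtListOn {z | z < e} η) :
    etaJPerm (listBelowRank L (rk e)) * togPerm e * (etaJPerm (listBelowRank L (rk e)))⁻¹
      = etaJPerm η * togPerm e * (etaJPerm η)⁻¹ :=
  etaJPerm_conj_togPerm_eq (nodup_listBelowRank hLnd hL _) (pairwise_listBelowRank hrk hL _)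
    (fun _ hx => (mem_listBelowRank hL).2 (hrk hx))
    (fun _ hx hex => ((mem_listBelowRank hL).1 hx).not_ge (hrk.monotone hex)) hη

/-- Here `τ_e^* = η_e t_e η_e⁻¹`, with `η_e` the product of toggles along the linear extension
`lext e` of `{x | x < e}`; `L j` enumerates the elements of rank `j`, so that `etaJPerm (L j)` is
`t_{rk=j}`, and `τ_{rk=i}^*` is the product of the `τ_x^*` over the elements `x` of rank `i`. -/
theorem tauStar_eq_rank_toggle_conj_general
    (P : Type*) [PartialOrder P] [Fintype P] (rk : P → ℕ)
    (hrkcov : ∀ x y : P, x ⋖ y → rk y = rk x + 1)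
    (L : ℕ → List P) (hL : ∀ i, (L i).Nodup ∧ ∀ x : P, x ∈ L i ↔ rk x = i)
    (lext : P → List P) (hlext : ∀ x : P, IsLinExtListOn {z : P | z < x} (lext x))
    (e : P) :
    (etaJPerm (lext e) * togPerm e * (etaJPerm (lext e))⁻¹
      = ((List.range (rk e)).map fun j => etaJPerm (L j)).prod * togPerm e *
          ((List.range (rk e)).reverse.map fun j => etaJPerm (L j)).prod) ∧
    ((L (rk e)).map fun x =>
        etaJPerm (lext x) * togPerm x * (etaJPerm (lext x))⁻¹).prod
      = ((List.range (rk e)).map fun j => etaJPerm (L j)).prod * etaJPerm (L (rk e)) *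
          ((List.range (rk e)).reverse.map fun j => etaJPerm (L j)).prod := by
  let := Fintype.toLocallyFiniteOrder (α := P)
  have hrk : StrictMono rk := (strictMono_iff_forall_covBy rk).2 fun x y h => by
    rw [hrkcov x y h]; exact Nat.lt_succ_self _
  have hLmem : ∀ j x, x ∈ L j ↔ rk x = j := fun j => (hL j).2
  have hinvol : ∀ j, (etaJPerm (L j))⁻¹ = etaJPerm (L j) := fun j =>
    etaJPerm_inv_of_antichain fun x hx y hy hxy =>
      (hrk hxy).ne (by rw [(hLmem j x).1 hx, (hLmem j y).1 hy])
  have htauStar : ∀ x, rk x = rk e → etaJPerm (lext x) * togPerm x * (etaJPerm (lext x))⁻¹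
      = etaJPerm (listBelowRank L (rk e)) * togPerm x * (etaJPerm (listBelowRank L (rk e)))⁻¹ :=
    fun x hx => hx ▸ (etaJPerm_listBelowRank_conj_togPerm hrk (fun j => (hL j).1) hLmem
      (hlext x)).symm
  rw [prod_map_reverse_of_involutive hinvol, ← etaJPerm_listBelowRank]
  refine ⟨htauStar e rfl, ?_⟩
  rw [List.map_congr_left fun x hx => htauStar x ((hLmem _ x).1 hx), prod_map_conj]
  rfl

/-- In a finite graded poset, for `e` of rank `i`:
`τ_e^* = t_{rk=0} ∘ ⋯ ∘ t_{rk=i-1} ∘ t_e ∘ t_{rk=i-1} ∘ ⋯ ∘ t_{rk=0}` and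
`τ_{rk=i}^* = t_{rk=0} ∘ ⋯ ∘ t_{rk=i-1} ∘ t_{rk=i} ∘ t_{rk=i-1} ∘ ⋯ ∘ t_{rk=0}`.
Here `τ_e^* = η_e t_e η_e⁻¹` with `η_e` the composition of toggles over a linear
extension `lext e` of `{x | x < e}`, `L j` enumerates the elements of rank `j`, and
`τ_{rk=i}^*` is the product of the `τ_x^*` over elements `x` of rank `i`. -/
theorem tauStar_eq_rank_toggle_conj
    (P : Type*) [PartialOrder P] [Fintype P] (rk : P → ℕ) (r : ℕ)
    (hrk0 : ∀ x : P, IsMin x → rk x = 0)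
    (hrkcov : ∀ x y : P, x ⋖ y → rk y = rk x + 1)
    (hrkmax : ∀ x : P, IsMax x → rk x = r)
    (L : ℕ → List P) (hL : ∀ i, (L i).Nodup ∧ ∀ x : P, x ∈ L i ↔ rk x = i)
    (lext : P → List P) (hlext : ∀ x : P, IsLinExtListOn {z : P | z < x} (lext x))
    (e : P) :
    (etaJPerm (lext e) * togPerm e * (etaJPerm (lext e))⁻¹
      = ((List.range (rk e)).map fun j => etaJPerm (L j)).prod * togPerm e *
          ((List.range (rk e)).reverse.map fun j => etaJPerm (L j)).prod) ∧
    ((L (rk e)).map fun x =>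
        etaJPerm (lext x) * togPerm x * (etaJPerm (lext x))⁻¹).prod
      = ((List.range (rk e)).map fun j => etaJPerm (L j)).prod * etaJPerm (L (rk e)) *
          ((List.range (rk e)).reverse.map fun j => etaJPerm (L j)).prod :=
  tauStar_eq_rank_toggle_conj_general P rk hrkcov L hL lext hlext e
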